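/- Let X ∈ ℝ^{m×n} with singular value decomposition X = U diag(σ) Vᵀ (σ the vector of singular values). For μ > 0 define f_μ(X) = max{⟨X, U'⟩ − (μ/2)‖U'‖_F² : ‖U'‖₂ ≤ 1}, where ‖·‖₂ is the spectral norm. Then 0 ≤ ‖X‖_* − f_μ(X) ≤ (μ/2)·min{m,n}, where ‖X‖_* is the nuclear norm. -/

import Mathlib

open Finset

/-! A matrix `U` with `‖U‖₂ ≤ 1` has rows and columns of Euclidean length at most `‖U‖₂`
(test it against a coordinate vector, resp. its own normalised row), so `‖U‖_F² ≤ min m n`.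
Thus on the whole feasible set the smoothed objective `⟨X, U⟩ - (μ / 2) ‖U‖_F²` lies between
`⟨X, U⟩ - (μ / 2) min m n` and `⟨X, U⟩`, and the two suprema inherit these bounds. -/

noncomputable def fprod {m n : ℕ} (A B : Matrix (Fin m) (Fin n) ℝ) : ℝ :=
  ∑ i, ∑ j, A i j * B i j

noncomputable def frob {m n : ℕ} (A : Matrix (Fin m) (Fin n) ℝ) : ℝ :=
  Real.sqrt (∑ i, ∑ j, (A i j) ^ 2)

noncomputable def l1 {m n : ℕ} (A : Matrix (Fin m) (Fin n) ℝ) : ℝ :=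
  ∑ i, ∑ j, |A i j|


noncomputable def matSpectralNorm {m n : ℕ} (U : Matrix (Fin m) (Fin n) ℝ) : ℝ :=
  sSup {t | ∃ x : Fin n → ℝ, (∑ j, (x j) ^ 2) ≤ 1 ∧
    t = Real.sqrt (∑ i, (∑ j, U i j * x j) ^ 2)}

noncomputable def nuclearNorm {m n : ℕ} (X : Matrix (Fin m) (Fin n) ℝ) : ℝ :=
  sSup {t | ∃ U : Matrix (Fin m) (Fin n) ℝ, matSpectralNorm U ≤ 1 ∧ t = fprod X U}

noncomputable def fmu {m n : ℕ} (μ : ℝ) (X : Matrix (Fin m) (Fin n) ℝ) : ℝ :=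
  sSup {t | ∃ U : Matrix (Fin m) (Fin n) ℝ, matSpectralNorm U ≤ 1 ∧
    t = fprod X U - μ / 2 * fprod U U}

section SupremumComparison

variable {ι : Type*} {P : ι → Prop} {f g : ι → ℝ}

lemma sSup_image_le_sSup_image (hne : ∃ i, P i) (hf : ∃ B, ∀ i, P i → f i ≤ B)
    (hgf : ∀ i, P i → g i ≤ f i) :
    sSup {t | ∃ i, P i ∧ t = g i} ≤ sSup {t | ∃ i, P i ∧ t = f i} := by
  obtain ⟨i₀, hi₀⟩ := hne
  obtain ⟨B, hB⟩ := hf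
  refine csSup_le ⟨g i₀, i₀, hi₀, rfl⟩ ?_
  rintro _ ⟨i, hi, rfl⟩
  have hbdd : BddAbove {t | ∃ i, P i ∧ t = f i} := ⟨B, by rintro _ ⟨j, hj, rfl⟩; exact hB j hj⟩
  exact (hgf i hi).trans (le_csSup hbdd ⟨i, hi, rfl⟩)

lemma sSup_image_le_sSup_image_add (hne : ∃ i, P i) (hg : ∃ B, ∀ i, P i → g i ≤ B) {c : ℝ}
    (hfg : ∀ i, P i → f i ≤ g i + c) :
    sSup {t | ∃ i, P i ∧ t = f i} ≤ sSup {t | ∃ i, P i ∧ t = g i} + c := by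
  obtain ⟨i₀, hi₀⟩ := hne
  obtain ⟨B, hB⟩ := hg
  refine csSup_le ⟨f i₀, i₀, hi₀, rfl⟩ ?_
  rintro _ ⟨i, hi, rfl⟩
  have hbdd : BddAbove {t | ∃ i, P i ∧ t = g i} := ⟨B, by rintro _ ⟨j, hj, rfl⟩; exact hB j hj⟩
  linarith [hfg i hi, le_csSup hbdd ⟨i, hi, rfl⟩]

end SupremumComparison

section SpectralNorm

variable {m n : ℕ}

lemma bddAbove_matSpectralNorm_set (U : Matrix (Fin m) (Fin n) ℝ) :
    BddAbove {t | ∃ x : Fin n → ℝ, (∑ j, (x j) ^ 2) ≤ 1 ∧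
      t = Real.sqrt (∑ i, (∑ j, U i j * x j) ^ 2)} := by
  refine ⟨Real.sqrt (∑ i, ∑ j, (U i j) ^ 2), ?_⟩
  rintro _ ⟨x, hx, rfl⟩
  refine Real.sqrt_le_sqrt (sum_le_sum fun i _ => ?_)
  have hcs := sum_mul_sq_le_sq_mul_sq univ (fun j => U i j) x
  have hrow : 0 ≤ ∑ j, (U i j) ^ 2 := sum_nonneg fun j _ => sq_nonneg _
  nlinarith

lemma sum_sq_mulVec_le_matSpectralNorm_sq (U : Matrix (Fin m) (Fin n) ℝ) {x : Fin n → ℝ}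
    (hx : ∑ j, (x j) ^ 2 ≤ 1) :
    ∑ i, (∑ j, U i j * x j) ^ 2 ≤ matSpectralNorm U ^ 2 :=
  (Real.sqrt_le_iff.mp (le_csSup (bddAbove_matSpectralNorm_set U) ⟨x, hx, rfl⟩)).2

lemma matSpectralNorm_nonneg (U : Matrix (Fin m) (Fin n) ℝ) : 0 ≤ matSpectralNorm U :=
  (Real.sqrt_nonneg _).trans (le_csSup (bddAbove_matSpectralNorm_set U) ⟨0, by simp, rfl⟩)

lemma matSpectralNorm_zero : matSpectralNorm (0 : Matrix (Fin m) (Fin n) ℝ) = 0 := by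
  refine le_antisymm (csSup_le ⟨0, 0, by simp, by simp⟩ ?_) (matSpectralNorm_nonneg 0)
  rintro _ ⟨x, -, rfl⟩
  simp

lemma sum_sq_col_le_matSpectralNorm_sq (U : Matrix (Fin m) (Fin n) ℝ) (j : Fin n) :
    ∑ i, (U i j) ^ 2 ≤ matSpectralNorm U ^ 2 := by
  simpa [Pi.single_apply] using
    sum_sq_mulVec_le_matSpectralNorm_sq U (x := Pi.single j 1) (by simp [Pi.single_apply])

lemma sum_sq_row_le_matSpectralNorm_sq (U : Matrix (Fin m) (Fin n) ℝ) (i : Fin m) :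
    ∑ j, (U i j) ^ 2 ≤ matSpectralNorm U ^ 2 := by
  set s := ∑ j, (U i j) ^ 2
  have hs : 0 ≤ s := sum_nonneg fun j _ => sq_nonneg _
  rcases hs.eq_or_lt with hs0 | hs0
  · rw [← hs0]
    exact sq_nonneg _
  set r := Real.sqrt s
  have hr : 0 < r := Real.sqrt_pos.mpr hs0
  have hrs : r ^ 2 = s := Real.sq_sqrt hs
  have hunit : ∑ j, (U i j / r) ^ 2 = 1 := by
    simp_rw [div_pow]
    rw [← sum_div, hrs, div_self hs0.ne']
  have hrow : ∑ j, U i j * (U i j / r) = r := by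
    simp_rw [mul_div_assoc', ← sq]
    rw [← sum_div]
    change s / r = r
    rw [← hrs]
    field_simp
  calc s = (∑ j, U i j * (U i j / r)) ^ 2 := by rw [hrow, hrs]
    _ ≤ ∑ i', (∑ j, U i' j * (U i j / r)) ^ 2 :=
      single_le_sum (f := fun i' => (∑ j, U i' j * (U i j / r)) ^ 2)
        (fun _ _ => sq_nonneg _) (mem_univ i)
    _ ≤ matSpectralNorm U ^ 2 := sum_sq_mulVec_le_matSpectralNorm_sq U hunit.le

lemma sum_sum_sq_le_min_mul_matSpectralNorm_sq (U : Matrix (Fin m) (Fin n) ℝ) :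
    ∑ i, ∑ j, (U i j) ^ 2 ≤ ((min m n : ℕ) : ℝ) * matSpectralNorm U ^ 2 := by
  have hm : ∑ i, ∑ j, (U i j) ^ 2 ≤ m * matSpectralNorm U ^ 2 := by
    simpa using sum_le_sum fun i (_ : i ∈ univ) => sum_sq_row_le_matSpectralNorm_sq U i
  have hn : ∑ i, ∑ j, (U i j) ^ 2 ≤ n * matSpectralNorm U ^ 2 := by
    rw [sum_comm]
    simpa using sum_le_sum fun j (_ : j ∈ univ) => sum_sq_col_le_matSpectralNorm_sq U j
  rw [Nat.cast_min, min_mul_of_nonneg _ _ (sq_nonneg _)]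
  exact le_min hm hn

lemma abs_entry_le_one {U : Matrix (Fin m) (Fin n) ℝ} (hU : matSpectralNorm U ≤ 1)
    (i : Fin m) (j : Fin n) : |U i j| ≤ 1 := by
  rw [← sq_le_one_iff_abs_le_one]
  calc U i j ^ 2 ≤ ∑ i', U i' j ^ 2 :=
        single_le_sum (f := fun i' => U i' j ^ 2) (fun _ _ => sq_nonneg _) (mem_univ i)
    _ ≤ matSpectralNorm U ^ 2 := sum_sq_col_le_matSpectralNorm_sq U j
    _ ≤ 1 := pow_le_one₀ (matSpectralNorm_nonneg U) hU

end SpectralNorm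

section FrobeniusProduct

variable {m n : ℕ}

lemma fprod_self_eq_sum_sq (U : Matrix (Fin m) (Fin n) ℝ) :
    fprod U U = ∑ i, ∑ j, (U i j) ^ 2 := by
  simp only [fprod, sq]

lemma fprod_self_nonneg (U : Matrix (Fin m) (Fin n) ℝ) : 0 ≤ fprod U U :=
  sum_nonneg fun _ _ => sum_nonneg fun _ _ => mul_self_nonneg _

lemma fprod_self_le_min {U : Matrix (Fin m) (Fin n) ℝ} (hU : matSpectralNorm U ≤ 1) :
    fprod U U ≤ ((min m n : ℕ) : ℝ) := by
  calc fprod U U ≤ ((min m n : ℕ) : ℝ) * matSpectralNorm U ^ 2 := by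
        rw [fprod_self_eq_sum_sq]
        exact sum_sum_sq_le_min_mul_matSpectralNorm_sq U
    _ ≤ ((min m n : ℕ) : ℝ) :=
      mul_le_of_le_one_right (Nat.cast_nonneg _) (pow_le_one₀ (matSpectralNorm_nonneg U) hU)

lemma fprod_le_l1 (X : Matrix (Fin m) (Fin n) ℝ) {U : Matrix (Fin m) (Fin n) ℝ}
    (hU : matSpectralNorm U ≤ 1) : fprod X U ≤ l1 X :=
  sum_le_sum fun i _ => sum_le_sum fun j _ =>
    calc X i j * U i j ≤ |X i j| * |U i j| := (le_abs_self _).trans (abs_mul _ _).le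
      _ ≤ |X i j| := mul_le_of_le_one_right (abs_nonneg _) (abs_entry_le_one hU i j)

end FrobeniusProduct

theorem stmt16 {m n : ℕ} (μ : ℝ) (hμ : 0 < μ) (X : Matrix (Fin m) (Fin n) ℝ) :
    0 ≤ nuclearNorm X - fmu μ X ∧
    nuclearNorm X - fmu μ X ≤ μ / 2 * (min m n : ℕ) := by
  have hfeasible : ∃ U : Matrix (Fin m) (Fin n) ℝ, matSpectralNorm U ≤ 1 :=
    ⟨0, matSpectralNorm_zero.le.trans zero_le_one⟩
  have hsmooth_le : ∀ U : Matrix (Fin m) (Fin n) ℝ, matSpectralNorm U ≤ 1 →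
      fprod X U - μ / 2 * fprod U U ≤ fprod X U := fun U _ =>
    sub_le_self _ (mul_nonneg (by positivity) (fprod_self_nonneg U))
  have hle_smooth : ∀ U : Matrix (Fin m) (Fin n) ℝ, matSpectralNorm U ≤ 1 →
      fprod X U ≤ fprod X U - μ / 2 * fprod U U + μ / 2 * (min m n : ℕ) := fun U hU => by
    linarith [mul_le_mul_of_nonneg_left (fprod_self_le_min hU) (by positivity : 0 ≤ μ / 2)]
  have hbdd : ∃ B, ∀ U : Matrix (Fin m) (Fin n) ℝ, matSpectralNorm U ≤ 1 →
      fprod X U - μ / 2 * fprod U U ≤ B :=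
    ⟨l1 X, fun U hU => (hsmooth_le U hU).trans (fprod_le_l1 X hU)⟩
  constructor
  · exact sub_nonneg.mpr (sSup_image_le_sSup_image hfeasible
      ⟨l1 X, fun U hU => fprod_le_l1 X hU⟩ hsmooth_le)
  · exact sub_le_iff_le_add'.mpr (sSup_image_le_sSup_image_add hfeasible hbdd hle_smooth)
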